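/- Let M = (W, ≤, N, V) be an intuitionistic neighbourhood model and M̂ = (Ŵ, ⪯, γ, V̂) its associated constructive neighbourhood model. Then M̂ is a full constructive neighbourhood model, and for all (w,Σ) ∈ Ŵ and all L-formulas φ: M̂,(w,Σ) ⊩ φ if and only if M,w ⊩ φ. -/
import Mathlib


/-
Common formalisation of the syntax and semantics of the intuitionistic
monotone modal logic IM, its generalised Hilbert calculi, intuitionistic
neighbourhood models, IFOM-structures, and related constructions.
-/

namespace IMPaper

/-- Formulas of the monotone modal language L. -/
inductive Formula : Type
  | prop : ℕ → Formula
  | bot  : Formula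
  | and  : Formula → Formula → Formula
  | or   : Formula → Formula → Formula
  | imp  : Formula → Formula → Formula
  | box  : Formula → Formula
  | dia  : Formula → Formula
deriving DecidableEq

/-- Negation: ¬φ abbreviates φ → ⊥. -/
def Formula.neg (φ : Formula) : Formula := φ.imp .bot

/-- Top: ⊤ abbreviates ⊥ → ⊥. -/
def Formula.top : Formula := Formula.bot.imp .bot

/-- Substitution of formulas for proposition letters. -/
def Formula.subst (σ : ℕ → Formula) : Formula → Formula
  | .prop i   => σ i
  | .bot      => .bot
  | .and φ ψ  => .and (φ.subst σ) (ψ.subst σ)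
  | .or φ ψ   => .or (φ.subst σ) (ψ.subst σ)
  | .imp φ ψ  => .imp (φ.subst σ) (ψ.subst σ)
  | .box φ    => .box (φ.subst σ)
  | .dia φ    => .dia (φ.subst σ)

private def pp0 : Formula := .prop 0
private def pp1 : Formula := .prop 1
private def pp2 : Formula := .prop 2

/-- A standard axiomatisation of intuitionistic propositional logic. -/
def IpcAx : Set Formula :=
  { Formula.imp pp0 (.imp pp1 pp0),
    Formula.imp (.imp pp0 (.imp pp1 pp2)) (.imp (.imp pp0 pp1) (.imp pp0 pp2)),
    Formula.imp (.and pp0 pp1) pp0,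
    Formula.imp (.and pp0 pp1) pp1,
    Formula.imp pp0 (.imp pp1 (.and pp0 pp1)),
    Formula.imp pp0 (.or pp0 pp1),
    Formula.imp pp1 (.or pp0 pp1),
    Formula.imp (.imp pp0 pp2) (.imp (.imp pp1 pp2) (.imp (.or pp0 pp1) pp2)),
    Formula.imp .bot pp0 }

/-- All substitution instances of a set of formulas. -/
def Instances (Ax : Set Formula) : Set Formula :=
  {φ | ∃ ψ ∈ Ax, ∃ σ, φ = ψ.subst σ}

/-- 𝒜x: all substitution instances of Ax together with all substitution
instances of the axioms of intuitionistic propositional logic. -/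
def ScrAx (Ax : Set Formula) : Set Formula := Instances Ax ∪ Instances IpcAx

/-- The generalised Hilbert calculus GHC(Ax). -/
inductive GHC (Ax : Set Formula) : Set Formula → Formula → Prop
  | el {Γ : Set Formula} {φ : Formula} : φ ∈ Γ → GHC Ax Γ φ
  | ax {Γ : Set Formula} {φ : Formula} : φ ∈ ScrAx Ax → GHC Ax Γ φ
  | mp {Γ : Set Formula} {φ ψ : Formula} :
      GHC Ax Γ φ → GHC Ax Γ (φ.imp ψ) → GHC Ax Γ ψ
  | monBox {Γ : Set Formula} {φ ψ : Formula} :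
      GHC Ax ∅ (φ.imp ψ) → GHC Ax Γ ((Formula.box φ).imp (Formula.box ψ))
  | monDia {Γ : Set Formula} {φ ψ : Formula} :
      GHC Ax ∅ (φ.imp ψ) → GHC Ax Γ ((Formula.dia φ).imp (Formula.dia ψ))

/-- The axioms (neg_a) and (I_◇) of the calculus IMCalc. -/
def IMAx : Set Formula :=
  { Formula.imp ((Formula.box pp0).and (Formula.dia pp0.neg)) .bot,
    Formula.imp ((Formula.box Formula.top).imp (Formula.dia pp0)) (Formula.dia pp0) }

/-- Derivability in the calculus IMCalc = GHC({(□p ∧ ◇¬p) → ⊥, (□⊤ → ◇p) → ◇p}). -/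
def IMC : Set Formula → Formula → Prop := GHC IMAx

/-- An intuitionistic neighbourhood: a partial function W ⇀ 𝒫(W), encoded as a
domain together with a (total) value function whose values matter on the domain. -/
structure Nbhd (W : Type) where
  dom : Set W
  val : W → Set W

/-- The data of an intuitionistic neighbourhood model. -/
structure INStruct (W : Type) where
  le : W → W → Prop
  N : Set (Nbhd W)
  V : ℕ → Set W

variable {W W' : Type}

/-- A set is upward closed w.r.t. the order of the structure. -/
def INStruct.Up (M : INStruct W) (s : Set W) : Prop :=
  ∀ ⦃w v : W⦄, M.le w v → w ∈ s → v ∈ s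

/-- `M` is an intuitionistic neighbourhood model: the order is a partial order,
the domain of every neighbourhood is upward closed, and the valuation assigns
upward closed sets to proposition letters. -/
def INStruct.IsModel (M : INStruct W) : Prop :=
  IsPartialOrder W M.le ∧ (∀ a ∈ M.N, M.Up a.dom) ∧ ∀ i, M.Up (M.V i)

/-- Truth of a formula at a world of an intuitionistic neighbourhood model. -/
def INStruct.sat (M : INStruct W) : Formula → W → Prop
  | .prop i, w  => w ∈ M.V i
  | .bot, _     => False
  | .and φ ψ, w => M.sat φ w ∧ M.sat ψ w
  | .or φ ψ, w  => M.sat φ w ∨ M.sat ψ w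
  | .imp φ ψ, w => ∀ v, M.le w v → M.sat φ v → M.sat ψ v
  | .box φ, w   => ∃ a ∈ M.N, w ∈ a.dom ∧
      ∀ w', M.le w w' → ∀ v ∈ a.val w', M.sat φ v
  | .dia φ, w   => ∀ w', M.le w w' → ∀ a ∈ M.N, w' ∈ a.dom →
      ∃ v ∈ a.val w', M.sat φ v

/-- Semantic consequence over the class of all intuitionistic neighbourhood models. -/
def INConseq (Γ : Set Formula) (φ : Formula) : Prop :=
  ∀ (W : Type) (M : INStruct W), M.IsModel →
    ∀ w : W, (∀ ψ ∈ Γ, M.sat ψ w) → M.sat φ w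

/-- A coherent intuitionistic neighbourhood: conditions (N1) and (N2). -/
def INStruct.CoherentNbhd (M : INStruct W) (a : Nbhd W) : Prop :=
  (∀ ⦃w w' : W⦄, M.le w w' → w ∈ a.dom → ∀ v ∈ a.val w, ∃ v' ∈ a.val w', M.le v v') ∧
  (∀ ⦃w : W⦄, w ∈ a.dom → ∀ v ∈ a.val w, ∀ v', M.le v v' →
      ∃ w', M.le w w' ∧ v' ∈ a.val w')

/-- A model is coherent if all its intuitionistic neighbourhoods are coherent. -/
def INStruct.Coherent (M : INStruct W) : Prop := ∀ a ∈ M.N, M.CoherentNbhd a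

/-- Semantic consequence over the class of coherent intuitionistic neighbourhood models. -/
def CohConseq (Γ : Set Formula) (φ : Formula) : Prop :=
  ∀ (W : Type) (M : INStruct W), M.IsModel → M.Coherent →
    ∀ w : W, (∀ ψ ∈ Γ, M.sat ψ w) → M.sat φ w

/-- The relation R: w R v iff v ∈ a(w) for some neighbourhood a of w. -/
def INStruct.R (M : INStruct W) (w v : W) : Prop :=
  ∃ a ∈ M.N, w ∈ a.dom ∧ v ∈ a.val w

/-- R~-Cartesian: w ≤~ v R~ w implies w = v (with ~ the equivalence closures). -/
def INStruct.RCartesian (M : INStruct W) : Prop :=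
  ∀ w v, Relation.EqvGen M.le w v → Relation.EqvGen M.R v w → w = v

/-- N-Cartesian: w R~ v and w, v ∈ dom(a) imply a(w) = a(v). -/
def INStruct.NCartesian (M : INStruct W) : Prop :=
  ∀ a ∈ M.N, ∀ w v, Relation.EqvGen M.R w v → w ∈ a.dom → v ∈ a.dom →
    a.val w = a.val v

/-- Cartesian: both R~-Cartesian and N-Cartesian. -/
def INStruct.Cartesian (M : INStruct W) : Prop := M.RCartesian ∧ M.NCartesian

/-- Isomorphism of intuitionistic neighbourhood structures. -/
def Isomorphic (M : INStruct W) (M' : INStruct W') : Prop :=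
  ∃ (α : W → W') (ν : Nbhd W → Nbhd W'),
    Function.Bijective α ∧ Set.BijOn ν M.N M'.N ∧
    (∀ w v, M.le w v ↔ M'.le (α w) (α v)) ∧
    (∀ a ∈ M.N, ∀ w, w ∈ a.dom ↔ α w ∈ (ν a).dom) ∧
    (∀ a ∈ M.N, ∀ u ∈ a.dom, ∀ w, w ∈ a.val u ↔ α w ∈ (ν a).val (α u)) ∧
    (∀ i w, w ∈ M.V i ↔ α w ∈ M'.V i)

end IMPaper
namespace IMPaper

variable {W : Type}

/-- The data of a constructive neighbourhood model. -/
structure CNStruct (W : Type) where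
  le : W → W → Prop
  nf : W → Set (Set W)
  V : ℕ → Set W

/-- `M` is a constructive neighbourhood model: the order is a preorder and the
valuation assigns upward closed sets. -/
def CNStruct.IsModel (M : CNStruct W) : Prop :=
  IsPreorder W M.le ∧ ∀ i, ∀ ⦃w v : W⦄, M.le w v → w ∈ M.V i → v ∈ M.V i

/-- Fullness: if γ(w) ≠ ∅ and w ⪯ w' then γ(w') ≠ ∅. -/
def CNStruct.Full (M : CNStruct W) : Prop :=
  ∀ ⦃w w' : W⦄, M.le w w' → M.nf w ≠ ∅ → M.nf w' ≠ ∅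

/-- Truth at a world of a constructive neighbourhood model. -/
def CNStruct.sat (M : CNStruct W) : Formula → W → Prop
  | .prop i, w  => w ∈ M.V i
  | .bot, _     => False
  | .and φ ψ, w => M.sat φ w ∧ M.sat ψ w
  | .or φ ψ, w  => M.sat φ w ∨ M.sat ψ w
  | .imp φ ψ, w => ∀ v, M.le w v → M.sat φ v → M.sat ψ v
  | .box φ, w   => ∀ w', M.le w w' → ∃ a ∈ M.nf w', ∀ v ∈ a, M.sat φ v
  | .dia φ, w   => ∀ w', M.le w w' → ∀ a ∈ M.nf w', ∃ v ∈ a, M.sat φ v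

/-- 𝒞(w): all sets of the form {a(f(a)) : a ∈ N_w} for a choice function
f : N_w → ↑w. -/
def INStruct.CCset (M : INStruct W) (w : W) : Set (Set (Set W)) :=
  {S | ∃ f : Nbhd W → W, (∀ a ∈ M.N, w ∈ a.dom → M.le w (f a)) ∧
    S = {s | ∃ a ∈ M.N, w ∈ a.dom ∧ s = a.val (f a)}}

/-- The carrier Ŵ = {(w, Σ) : Σ ∈ 𝒞(w)}. -/
def INStruct.HatW (M : INStruct W) : Type := {p : W × Set (Set W) // p.2 ∈ M.CCset p.1}

/-- The constructive neighbourhood model M̂ associated with M, with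
(w,Σ) ⪯ (w',Σ') iff w ≤ w', γ(w,Σ) = Σ (lifted to subsets of Ŵ), and
V̂(p_i) = {(w,Σ) : w ∈ V(p_i)}. -/
def INStruct.hat (M : INStruct W) : CNStruct M.HatW where
  le := fun p q => M.le p.1.1 q.1.1
  nf := fun p => (fun s => {q : M.HatW | q.1.1 ∈ s}) '' p.1.2
  V := fun i => {p | p.1.1 ∈ M.V i}

end IMPaper
namespace IMPaper


variable {W : Type}

lemma CCset_base (M : INStruct W) (hrefl : ∀ w : W, M.le w w) (w : W) :
    {s | ∃ a ∈ M.N, w ∈ a.dom ∧ s = a.val w} ∈ M.CCset w :=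
  ⟨fun _ => w, fun _ _ _ => hrefl w, rfl⟩

/-- The canonical lift of a world, via the constant choice function. -/
def baseHat (M : INStruct W) (hrefl : ∀ w : W, M.le w w) (v : W) : M.HatW :=
  ⟨(v, {s | ∃ a ∈ M.N, v ∈ a.dom ∧ s = a.val v}), CCset_base M hrefl v⟩

lemma hat_truth (M : INStruct W) (hM : M.IsModel) :
    ∀ (φ : Formula) (p : M.HatW), M.hat.sat φ p ↔ M.sat φ p.1.1 := by
  obtain ⟨hpo, hdom, hV⟩ := hM
  have hrefl : ∀ w : W, M.le w w := fun w => hpo.refl w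
  have htrans : ∀ {a b c : W}, M.le a b → M.le b c → M.le a c :=
    fun h h' => hpo.trans _ _ _ h h'
  intro φ
  induction φ with
  | prop i => intro p; exact Iff.rfl
  | bot => intro p; exact Iff.rfl
  | and φ ψ ihφ ihψ => intro p; exact and_congr (ihφ p) (ihψ p)
  | or φ ψ ihφ ihψ => intro p; exact or_congr (ihφ p) (ihψ p)
  | imp φ ψ ihφ ihψ =>
    intro p
    constructor
    · intro h v hle hφ
      have := h (baseHat M hrefl v) hle ((ihφ _).mpr hφ)
      exact (ihψ _).mp this
    · intro h q hle hφ
      exact (ihψ q).mpr (h q.1.1 hle ((ihφ q).mp hφ))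
  | box φ ihφ =>
    intro p
    constructor
    · -- hat box → M box
      intro h
      by_contra hcon
      simp only [INStruct.sat] at hcon
      push_neg at hcon
      have choice : ∀ a : Nbhd W, ∃ w', M.le p.1.1 w' ∧
          ((a ∈ M.N ∧ p.1.1 ∈ a.dom) → ∃ v ∈ a.val w', ¬ M.sat φ v) := by
        intro a
        by_cases hc : a ∈ M.N ∧ p.1.1 ∈ a.dom
        · obtain ⟨w', hw', v, hv, hnv⟩ := hcon a hc.1 hc.2
          exact ⟨w', hw', fun _ => ⟨v, hv, hnv⟩⟩
        · exact ⟨p.1.1, hrefl _, fun h' => absurd h' hc⟩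
      choose f hf1 hf2 using choice
      have hS : {s | ∃ a ∈ M.N, p.1.1 ∈ a.dom ∧ s = a.val (f a)} ∈ M.CCset p.1.1 :=
        ⟨f, fun a _ _ => hf1 a, rfl⟩
      obtain ⟨A, hA, hAall⟩ :=
        h ⟨(p.1.1, {s | ∃ a ∈ M.N, p.1.1 ∈ a.dom ∧ s = a.val (f a)}), hS⟩ (hrefl _)
      obtain ⟨s, hs, rfl⟩ := hA
      obtain ⟨a, haN, had, rfl⟩ := hs
      obtain ⟨v, hv, hnv⟩ := hf2 a ⟨haN, had⟩
      exact hnv ((ihφ (baseHat M hrefl v)).mp (hAall (baseHat M hrefl v) hv))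
    · -- M box → hat box
      rintro ⟨a, haN, had, ha⟩ q hle
      obtain ⟨g, hg, hS⟩ := q.2
      have had' : q.1.1 ∈ a.dom := hdom a haN hle had
      refine ⟨{r : M.HatW | r.1.1 ∈ a.val (g a)}, ⟨a.val (g a), ?_, rfl⟩, ?_⟩
      · rw [hS]; exact ⟨a, haN, had', rfl⟩
      · intro r hr
        exact (ihφ r).mpr (ha (g a) (htrans hle (hg a haN had')) r.1.1 hr)
  | dia φ ihφ =>
    intro p
    constructor
    · -- hat dia → M dia
      intro h w' hle a haN had
      have hS : {s | ∃ b ∈ M.N, w' ∈ b.dom ∧ s = b.val w'} ∈ M.CCset w' :=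
        CCset_base M hrefl w'
      obtain ⟨r, hr, hφr⟩ := h (baseHat M hrefl w') hle
        {r : M.HatW | r.1.1 ∈ a.val w'} ⟨a.val w', ⟨a, haN, had, rfl⟩, rfl⟩
      exact ⟨r.1.1, hr, (ihφ r).mp hφr⟩
    · -- M dia → hat dia
      intro h q hle A hA
      obtain ⟨s, hs, rfl⟩ := hA
      obtain ⟨g, hg, hS⟩ := q.2
      rw [hS] at hs
      obtain ⟨a, haN, had, rfl⟩ := hs
      have had' : g a ∈ a.dom := hdom a haN (hg a haN had) had
      obtain ⟨v, hv, hφv⟩ := h (g a) (htrans hle (hg a haN had)) a haN had'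
      exact ⟨baseHat M hrefl v, hv, (ihφ _).mpr hφv⟩

/-- M̂ is a full constructive neighbourhood model and
M̂,(w,Σ) ⊩ φ iff M,w ⊩ φ. -/
theorem hat_model_and_truth {W : Type} (M : INStruct W) (hM : M.IsModel) :
    M.hat.IsModel ∧ M.hat.Full ∧
    ∀ (φ : Formula) (p : M.HatW), M.hat.sat φ p ↔ M.sat φ p.1.1 := by
  obtain ⟨hpo, hdom, hV⟩ := hM
  have hrefl : ∀ w : W, M.le w w := fun w => hpo.refl w
  have htrans : ∀ {a b c : W}, M.le a b → M.le b c → M.le a c :=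
    fun h h' => hpo.trans _ _ _ h h'
  refine ⟨⟨{ refl := fun p => hrefl _, trans := fun p q r => htrans }, ?_⟩, ?_, hat_truth M ⟨hpo, hdom, hV⟩⟩
  · intro i p q hle hp
    exact hV i hle hp
  · intro p q hle hne
    rw [← Set.nonempty_iff_ne_empty] at hne ⊢
    obtain ⟨A, hA⟩ := hne
    obtain ⟨s, hs, rfl⟩ := hA
    obtain ⟨f, hf, hS⟩ := p.2
    rw [hS] at hs
    obtain ⟨a, haN, had, rfl⟩ := hs
    obtain ⟨g, hg, hS2⟩ := q.2
    have had' : q.1.1 ∈ a.dom := hdom a haN hle had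
    refine ⟨{r : M.HatW | r.1.1 ∈ a.val (g a)}, ⟨a.val (g a), ?_, rfl⟩⟩
    rw [hS2]
    exact ⟨a, haN, had', rfl⟩

end IMPaper
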